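/- arXiv:1104.1061 — 4 statements merged into one kernel-verified Lean document; each statement's English description precedes it below -/
import Mathlib

section
/- Let n ≥ 1, let H ∈ ℂ[x₁,…,xₙ] be a squarefree, nonconstant homogeneous polynomial, and let P ∈ ℂ[x₁,…,xₙ] be a homogeneous polynomial such that [H,P] = 0, i.e. (∂H/∂xᵢ)(∂P/∂xⱼ) − (∂H/∂xⱼ)(∂P/∂xᵢ) = 0 for all 1 ≤ i < j ≤ n. Then there exist a ∈ ℂ and k ∈ ℕ such that P = a·H^k. Moreover, if P is homogeneous of degree d and deg H does not divide d, then P = 0. -/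
/-!
Euler's identity turns the vanishing of the Jacobian minors of homogeneous `H` and `P` of degrees
`m` and `n` into `m • H ∂ⱼP = n • P ∂ⱼH`, so `H ∣ P ∂ⱼH` for all `j` once `n ≠ 0`. If a prime
factor `q` of `H = q R` did not divide `P`, it would divide every `∂ⱼH = ∂ⱼq R + q ∂ⱼR`, hence
every `∂ⱼq` since `q ∤ R` by squarefreeness; comparing total degrees forces `∂ⱼq = 0`, so `q` is
constant. Hence `H ∣ P`, the cofactor can be taken homogeneous of degree `n - m` with vanishing
minors against `H`, and induction on `n` gives `P = a H ^ k`.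
-/

open MvPolynomial

theorem Squarefree.dvd_of_forall_prime_dvd {α : Type*} [CommMonoidWithZero α]
    [Nontrivial α] [UniqueFactorizationMonoid α] {a b : α} (ha : Squarefree a)
    (h : ∀ p, Prime p → p ∣ a → p ∣ b) : a ∣ b := by
  induction a using UniqueFactorizationMonoid.induction_on_prime generalizing b with
  | h₁ => exact absurd ha not_squarefree_zero
  | h₂ u hu => exact hu.dvd
  | h₃ a p _ hp ih =>
    obtain ⟨c, rfl⟩ := ih ha.of_mul_right fun q hq hqa => h q hq (dvd_mul_of_dvd_right hqa p)
    have hpa : ¬ p ∣ a := fun hpa => hp.not_isUnit (ha p (mul_dvd_mul_left p hpa))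
    obtain ⟨d, rfl⟩ := (hp.dvd_or_dvd (h p hp (dvd_mul_right p a))).resolve_left hpa
    rw [mul_left_comm]
    exact mul_dvd_mul_left p (dvd_mul_right a d)

namespace MvPolynomial

variable {σ R : Type*}

section CommSemiring

variable [CommSemiring R]

theorem totalDegree_pderiv_lt {f : MvPolynomial σ R} {i : σ} (h : pderiv i f ≠ 0) :
    (pderiv i f).totalDegree < f.totalDegree := by
  have hsucc : ∀ m ∈ (pderiv i f).support, (m.sum fun _ e => e) < f.totalDegree := by
    intro m hm
    have hm' : m + Finsupp.single i 1 ∈ f.support := by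
      rw [mem_support_iff, coeff_pderiv] at hm
      exact mem_support_iff.mpr (left_ne_zero_of_mul hm)
    have := le_totalDegree hm'
    rw [Finsupp.sum_add_index' (fun _ => rfl) (fun _ _ _ => rfl), Finsupp.sum_single_index rfl]
      at this
    omega
  obtain ⟨m, hm⟩ := ne_zero_iff.mp h
  exact (Finset.sup_lt_iff ((Nat.zero_le _).trans_lt (hsucc m (mem_support_iff.mpr hm)))).mpr hsucc

attribute [local instance] gradedAlgebra in
theorem IsHomogeneous.homogeneousComponent_mul_add {φ : MvPolynomial σ R} {m : ℕ}
    (hφ : φ.IsHomogeneous m) (ψ : MvPolynomial σ R) (k : ℕ) :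
    homogeneousComponent (m + k) (φ * ψ) = φ * homogeneousComponent k ψ := by
  rw [← decomposition.decompose'_apply, ← decomposition.decompose'_apply]
  exact DirectSum.coe_decompose_mul_add_of_left_mem (homogeneousSubmodule σ R) (j := k)
      ((mem_homogeneousSubmodule m φ).mpr hφ)

theorem IsHomogeneous.exists_isHomogeneous_eq_mul {H P : MvPolynomial σ R} {m k : ℕ}
    (hH : H.IsHomogeneous m) (hP : P.IsHomogeneous (m + k)) (hdvd : H ∣ P) :
    ∃ Q : MvPolynomial σ R, Q.IsHomogeneous k ∧ P = H * Q := by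
  obtain ⟨Q₀, rfl⟩ := hdvd
  refine ⟨homogeneousComponent k Q₀, homogeneousComponent_isHomogeneous k Q₀, ?_⟩
  rw [← hH.homogeneousComponent_mul_add, homogeneousComponent_of_mem
    ((mem_homogeneousSubmodule _ _).mpr hP), if_pos rfl]

end CommSemiring

theorem pderiv_eq_zero_of_dvd [CommSemiring R] [NoZeroDivisors R] {f : MvPolynomial σ R} {i : σ}
    (h : f ∣ pderiv i f) : pderiv i f = 0 := by
  by_contra hne
  exact (totalDegree_le_of_dvd_of_isDomain h hne).not_gt (totalDegree_pderiv_lt hne)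

theorem eq_C_of_forall_pderiv_eq_zero [CommSemiring R] [NoZeroDivisors R] [CharZero R]
    {f : MvPolynomial σ R} (h : ∀ i, pderiv i f = 0) : f = C (coeff 0 f) := by
  classical
  ext s
  rw [coeff_C]
  split_ifs with hs
  · rw [hs]
  obtain ⟨i, hi⟩ : ∃ i, s i ≠ 0 := by
    by_contra! hc; exact hs (Finsupp.ext hc).symm
  have hcoeff := coeff_pderiv (i := i) f (s - Finsupp.single i 1)
  rw [h i, coeff_zero, tsub_add_cancel_of_le (Finsupp.single_le_iff.mpr (by omega))] at hcoeff
  exact (mul_eq_zero.mp hcoeff.symm).resolve_right (Nat.cast_add_one_ne_zero _)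

section Field

variable {K : Type*} [Field K] [CharZero K]

theorem _root_.Prime.not_forall_dvd_pderiv {q : MvPolynomial σ K} (hq : Prime q) :
    ¬ ∀ i, q ∣ pderiv i q := by
  intro h
  have hC := eq_C_of_forall_pderiv_eq_zero fun i => pderiv_eq_zero_of_dvd (h i)
  have hc : coeff 0 q ≠ 0 := fun h0 => hq.ne_zero (by rw [hC, h0, map_zero])
  exact hq.not_isUnit (hC ▸ (isUnit_iff_ne_zero.mpr hc).map C)

theorem _root_.Squarefree.dvd_of_forall_dvd_mul_pderiv {H P : MvPolynomial σ K} (hH : Squarefree H) (h : ∀ i, H ∣ P * pderiv i H) : H ∣ P := by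
  refine hH.dvd_of_forall_prime_dvd fun q hq hqH => ?_
  by_contra hqP
  obtain ⟨R, rfl⟩ := hqH
  have hqR : ¬ q ∣ R := fun hqR => hq.not_isUnit (hH q (mul_dvd_mul_left q hqR))
  refine hq.not_forall_dvd_pderiv fun i => ?_
  have hqd : q ∣ pderiv i (q * R) :=
    (hq.dvd_or_dvd ((dvd_mul_right q R).trans (h i))).resolve_left hqP
  rw [pderiv_mul, dvd_add_left (dvd_mul_right q _)] at hqd
  exact (hq.dvd_or_dvd hqd).resolve_right hqR

end Field

def JacobianMinorsVanish [CommRing R] (f g : MvPolynomial σ R) : Prop :=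
  ∀ i j, pderiv i f * pderiv j g - pderiv j f * pderiv i g = 0

namespace JacobianMinorsVanish

variable [CommRing R] {H P Q : MvPolynomial σ R}

theorem smul_mul_pderiv_eq [Fintype σ] {m n : ℕ} (h : JacobianMinorsVanish H P)
    (hH : H.IsHomogeneous m) (hP : P.IsHomogeneous n) (j : σ) :
    m • (H * pderiv j P) = n • (P * pderiv j H) :=
  calc m • (H * pderiv j P) = (∑ i, X i * pderiv i H) * pderiv j P := by
        rw [hH.sum_X_mul_pderiv, smul_mul_assoc]
    _ = (∑ i, X i * pderiv i P) * pderiv j H := by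
        rw [Finset.sum_mul, Finset.sum_mul]
        exact Finset.sum_congr rfl fun i _ => by linear_combination X i * h i j
    _ = n • (P * pderiv j H) := by rw [hP.sum_X_mul_pderiv, smul_mul_assoc]

theorem of_mul_left [IsDomain R] (h : JacobianMinorsVanish H (H * Q)) (hH : H ≠ 0) :
    JacobianMinorsVanish H Q := by
  intro i j
  have hij := h i j
  rw [pderiv_mul, pderiv_mul] at hij
  refine (mul_eq_zero.mp ?_).resolve_left hH
  linear_combination hij

theorem exists_eq_C_mul_pow [Fintype σ] {K : Type*} [Field K] [CharZero K]
    {H P : MvPolynomial σ K} {m n : ℕ} (hHsf : Squarefree H) (hH : H.IsHomogeneous m)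
    (hm : 0 < m) (hP : P.IsHomogeneous n) (h : JacobianMinorsVanish H P) :
    ∃ (a : K) (k : ℕ), P = C a * H ^ k := by
  induction n using Nat.strong_induction_on generalizing P with
  | _ n ih =>
  rcases eq_or_ne P 0 with rfl | hP0
  · exact ⟨0, 0, by rw [map_zero, zero_mul]⟩
  rcases Nat.eq_zero_or_pos n with rfl | hn
  · exact ⟨coeff 0 P, 0, by
      rw [pow_zero, mul_one, ← totalDegree_eq_zero_iff_eq_C, totalDegree_zero_iff_isHomogeneous]
      exact hP⟩
  have hdvd : H ∣ P := by
    refine hHsf.dvd_of_forall_dvd_mul_pderiv fun j => ?_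
    have hn_unit : IsUnit (n : MvPolynomial σ K) := by
      rw [← map_natCast C]
      exact (isUnit_iff_ne_zero.mpr (Nat.cast_ne_zero.mpr hn.ne')).map C
    rw [← hn_unit.dvd_mul_left, ← nsmul_eq_mul, ← h.smul_mul_pderiv_eq hH hP j]
    rw [nsmul_eq_mul, mul_left_comm]
    exact dvd_mul_right H _
  have hmn : m ≤ n := by
    rw [← hH.totalDegree hHsf.ne_zero, ← hP.totalDegree hP0]
    exact totalDegree_le_of_dvd_of_isDomain hdvd hP0
  obtain ⟨Q, hQ, rfl⟩ :=
    hH.exists_isHomogeneous_eq_mul (k := n - m) (by rwa [Nat.add_sub_cancel' hmn]) hdvd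
  obtain ⟨a, k, rfl⟩ := ih (n - m) (by omega) hQ (h.of_mul_left hHsf.ne_zero)
  exact ⟨a, k + 1, by ring⟩

end JacobianMinorsVanish

end MvPolynomial

theorem stmt0_general (n : ℕ) (H P : MvPolynomial (Fin n) ℂ) (dH dP : ℕ)
    (hHsf : Squarefree H) (hHhom : H.IsHomogeneous dH) (hdH : 0 < dH)
    (hPhom : P.IsHomogeneous dP)
    (hbr : ∀ i j : Fin n, pderiv i H * pderiv j P - pderiv j H * pderiv i P = 0) :
    (∃ (a : ℂ) (k : ℕ), P = C a * H ^ k) ∧ (¬ dH ∣ dP → P = 0) := by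
  obtain ⟨a, k, rfl⟩ := JacobianMinorsVanish.exists_eq_C_mul_pow hHsf hHhom hdH hPhom hbr
  refine ⟨⟨a, k, rfl⟩, fun hndvd => ?_⟩
  by_contra hP0
  exact hndvd ⟨k, hPhom.inj_right ((hHhom.pow k).C_mul a) hP0⟩

theorem stmt0 (n : ℕ) (hn : 1 ≤ n) (H P : MvPolynomial (Fin n) ℂ) (dH dP : ℕ)
    (hHsf : Squarefree H) (hHhom : H.IsHomogeneous dH) (hdH : 0 < dH)
    (hPhom : P.IsHomogeneous dP)
    (hbr : ∀ i j : Fin n, pderiv i H * pderiv j P - pderiv j H * pderiv i P = 0) :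
    (∃ (a : ℂ) (k : ℕ), P = C a * H ^ k) ∧ (¬ dH ∣ dP → P = 0) :=
  stmt0_general n H P dH dP hHsf hHhom hdH hPhom hbr
end

section
/- Let F = x + F₂ + F₃ + F₄ with F₄ ≠ 0 and G = z + G₂ + ⋯ + G₆ with G₆ ≠ 0, where Fᵢ, Gᵢ ∈ ℂ[x,y,z] are homogeneous of degree i. If deg[F,G] < 10, then either (1) there exist a squarefree homogeneous polynomial H of degree 2 and α ∈ ℂ, α ≠ 0, such that F₄ = H² and G₆ = αH³, or (2) there exist a homogeneous polynomial h of degree 1 and α ∈ ℂ, α ≠ 0, such that F₄ = h⁴ and G₆ = αh⁶. -/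
/-!
The degree-8 part of each minor of the Jacobian of `(F, G)` is the corresponding minor for
`(F₄, G₆)`, so all of those vanish. Contracting them with Euler's identity gives
`3 G₆ ∇F₄ = 2 F₄ ∇G₆`, i.e. `F₄³` and `G₆²` have proportional gradients. Two homogeneous
polynomials with proportional gradients are associated: after dividing out their gcd, each
coprime part divides its own partial derivatives, which forces it to be constant.
Unique factorisation turns `F₄³ ~ G₆²` into `F₄ ~ g²`, `G₆ ~ g³` for a quadratic form `g`,
and `g` is either squarefree or a constant times the square of a linear form.
-/

open MvPolynomial

noncomputable def jacMinor (f g : MvPolynomial (Fin 3) ℂ) (i j : Fin 3) :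
    MvPolynomial (Fin 3) ℂ :=
  pderiv i f * pderiv j g - pderiv j f * pderiv i g

theorem UniqueFactorizationMonoid.exists_associated_pow_of_associated_pow_succ {α : Type*}
    [CommMonoidWithZero α] [UniqueFactorizationMonoid α] {a b : α} {k : ℕ} (hk : k ≠ 0)
    (h : Associated (a ^ (k + 1)) (b ^ k)) :
    ∃ c, Associated a (c ^ k) ∧ Associated b (c ^ (k + 1)) := by
  by_cases ha : a = 0
  · have hb : b = 0 := pow_eq_zero_iff hk |>.1 <| h.eq_zero_iff.1 (by simp [ha])
    exact ⟨0, by simp [ha, hk], by simp [hb]⟩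
  obtain ⟨c, rfl⟩ : a ∣ b :=
    (pow_dvd_pow_iff_dvd hk).1 ((pow_dvd_pow a k.le_succ).trans h.dvd)
  have hac : Associated a (c ^ k) :=
    Associated.of_mul_left (by rwa [← pow_succ, ← mul_pow]) (Associated.refl _) (pow_ne_zero k ha)
  exact ⟨c, hac, by simpa only [pow_succ] using hac.mul_right c⟩

namespace MvPolynomial

variable {σ R K : Type*}

section CommSemiring

variable [CommSemiring R] {f g : MvPolynomial σ R} {m n : ℕ}

theorem totalDegree_pderiv_le (i : σ) : (pderiv i f).totalDegree ≤ f.totalDegree - 1 := by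
  conv_lhs => rw [← sum_homogeneousComponent f, map_sum]
  refine (totalDegree_finsetSum _ _).trans (Finset.sup_le fun k hk => ?_)
  have := Finset.mem_range.1 hk
  exact (homogeneousComponent_isHomogeneous k f).pderiv.totalDegree_le.trans (by omega)

theorem order_coe_le_totalDegree (hf : f ≠ 0) :
    (f : MvPowerSeries σ R).order ≤ f.totalDegree := by
  obtain ⟨d, hd⟩ := exists_coeff_ne_zero hf
  calc (f : MvPowerSeries σ R).order ≤ d.degree := MvPowerSeries.order_le (by rwa [coeff_coe])
    _ ≤ f.totalDegree := by exact_mod_cast le_totalDegree (mem_support_iff.2 hd)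

theorem IsHomogeneous.le_order_coe (hf : f.IsHomogeneous n) :
    (n : ℕ∞) ≤ (f : MvPowerSeries σ R).order :=
  MvPowerSeries.nat_le_order fun _ hd => by rw [coeff_coe]; exact hf.coeff_eq_zero hd.ne

theorem isHomogeneous_totalDegree_of_totalDegree_le_order
    (h : (f.totalDegree : ℕ∞) ≤ (f : MvPowerSeries σ R).order) : f.IsHomogeneous f.totalDegree := by
  intro d hd
  have hle : d.degree ≤ f.totalDegree := by exact_mod_cast le_totalDegree (mem_support_iff.2 hd)
  have hge : (f.totalDegree : ℕ∞) ≤ d.degree :=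
    h.trans (MvPowerSeries.order_le (by rwa [coeff_coe]))
  exact (DFunLike.congr_fun Finsupp.degree_eq_weight_one d).symm.trans
    (le_antisymm hle (by exact_mod_cast hge))

theorem IsHomogeneous.nsmul_mul_pderiv_eq [Fintype σ] (hf : f.IsHomogeneous m)
    (hg : g.IsHomogeneous n) (h : ∀ i j, pderiv i f * pderiv j g = pderiv j f * pderiv i g)
    (i : σ) : n • (g * pderiv i f) = m • (f * pderiv i g) := by
  rw [← smul_mul_assoc, ← smul_mul_assoc, ← hg.sum_X_mul_pderiv, ← hf.sum_X_mul_pderiv,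
    Finset.sum_mul, Finset.sum_mul]
  refine Finset.sum_congr rfl fun j _ => ?_
  rw [mul_assoc, mul_comm (pderiv j g), h, mul_assoc, mul_comm (pderiv j f)]

end CommSemiring

section CommRing

variable [CommRing R] {f g : MvPolynomial σ R}

theorem pow_mul_pderiv_pow_eq {a b : ℕ} (ha : a ≠ 0) (hb : b ≠ 0) {i : σ}
    (h : a • (g * pderiv i f) = b • (f * pderiv i g)) :
    g ^ b * pderiv i (f ^ a) = f ^ a * pderiv i (g ^ b) := by
  obtain ⟨a, rfl⟩ := Nat.exists_eq_add_one_of_ne_zero ha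
  obtain ⟨b, rfl⟩ := Nat.exists_eq_add_one_of_ne_zero hb
  rw [nsmul_eq_mul, nsmul_eq_mul] at h
  simp only [pderiv_pow, Nat.add_sub_cancel]
  linear_combination f ^ a * g ^ b * h

variable [IsDomain R]

theorem IsHomogeneous.exists_of_mul {n : ℕ} (h : (f * g).IsHomogeneous n) (hf : f ≠ 0)
    (hg : g ≠ 0) : ∃ a b, a + b = n ∧ f.IsHomogeneous a ∧ g.IsHomogeneous b := by
  have hsum : f.totalDegree + g.totalDegree = n := by
    rw [← totalDegree_mul_of_isDomain hf hg, h.totalDegree (mul_ne_zero hf hg)]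
  -- Order (lowest degree) and total degree are both additive, so each factor has them equal.
  have hle : (f.totalDegree : ℕ∞) ≤ (f : MvPowerSeries σ R).order ∧
      (g.totalDegree : ℕ∞) ≤ (g : MvPowerSeries σ R).order := by
    have hord := h.le_order_coe
    rw [coe_mul, MvPowerSeries.order_mul, ← hsum] at hord
    have hf' := order_coe_le_totalDegree hf
    have hg' := order_coe_le_totalDegree hg
    generalize (f : MvPowerSeries σ R).order = x at *
    generalize (g : MvPowerSeries σ R).order = y at *
    lift x to ℕ using ne_top_of_le_ne_top (ENat.natCast_ne_top _) hf'
    lift y to ℕ using ne_top_of_le_ne_top (ENat.natCast_ne_top _) hg'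
    norm_cast at *
    omega
  exact ⟨_, _, hsum, isHomogeneous_totalDegree_of_totalDegree_le_order hle.1,
    isHomogeneous_totalDegree_of_totalDegree_le_order hle.2⟩

theorem IsHomogeneous.of_C_mul_pow {c : R} (hc : c ≠ 0) {k d : ℕ} (hk : k ≠ 0)
    (h : (C c * f ^ k).IsHomogeneous (k * d)) : f.IsHomogeneous d := by
  by_cases hf : f = 0
  · rw [hf]; exact isHomogeneous_zero _ _ _
  have hCf : C c * f ^ (k - 1) ≠ 0 := mul_ne_zero (C_ne_zero.2 hc) (pow_ne_zero _ hf)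
  have h' : (C c * f ^ (k - 1) * f).IsHomogeneous (k * d) := by
    rwa [mul_assoc, ← pow_succ, Nat.sub_one_add_one hk]
  obtain ⟨_, e, _, _, he⟩ := h'.exists_of_mul hCf hf
  have hek : k * e = k * d := by
    rw [mul_comm]
    exact ((he.pow k).C_mul c).inj_right h (mul_ne_zero (C_ne_zero.2 hc) (pow_ne_zero _ hf))
  rwa [← Nat.eq_of_mul_eq_mul_left (Nat.pos_of_ne_zero hk) hek]

end CommRing

section Field

variable [Field K] {p q : MvPolynomial σ K}

theorem exists_C_mul_eq_of_associated (h : Associated p q) : ∃ c : K, c ≠ 0 ∧ q = C c * p := by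
  obtain ⟨u, rfl⟩ := h
  obtain ⟨c, hc, hu⟩ := isUnit_iff_eq_C_of_isReduced.1 u.isUnit
  exact ⟨c, hc.ne_zero, by rw [hu, mul_comm]⟩

theorem IsHomogeneous.exists_eq_C_mul_sq_of_not_squarefree (hp : p.IsHomogeneous 2)
    (hp0 : p ≠ 0) (hsq : ¬Squarefree p) :
    ∃ (c : K) (l : MvPolynomial σ K), c ≠ 0 ∧ l.IsHomogeneous 1 ∧ p = C c * l ^ 2 := by
  simp only [Squarefree, not_forall] at hsq
  obtain ⟨l, ⟨w, rfl⟩, hl⟩ := hsq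
  have hl0 : l ≠ 0 := by rintro rfl; simp at hp0
  have hw0 : w ≠ 0 := by rintro rfl; simp at hp0
  have hdeg := hp.totalDegree hp0
  rw [totalDegree_mul_of_isDomain (mul_ne_zero hl0 hl0) hw0,
    totalDegree_mul_of_isDomain hl0 hl0] at hdeg
  have hl1 : l.totalDegree ≠ 0 := fun h0 =>
    hl (isUnit_iff_totalDegree_of_isReduced.2 ⟨isUnit_iff_ne_zero.2 fun hc => hl0 <| by
      rw [totalDegree_eq_zero_iff_eq_C.1 h0, hc, C_0], h0⟩)
  obtain ⟨_, _, _, ha, _⟩ := (mul_assoc l l w ▸ hp).exists_of_mul hl0 (mul_ne_zero hl0 hw0)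
  obtain ⟨c, rfl⟩ : ∃ c, w = C c := ⟨_, totalDegree_eq_zero_iff_eq_C.1 (by omega)⟩
  refine ⟨c, l, fun hc => hw0 (by rw [hc, C_0]), ?_, by ring⟩
  rwa [← ha.totalDegree hl0, show l.totalDegree = 1 by omega] at ha

theorem exists_pow_eq_and_eq_C_mul_pow [IsAlgClosed K] {a b : K} (ha : a ≠ 0) (hb : b ≠ 0)
    (p : MvPolynomial σ K) {k : ℕ} (hk : k ≠ 0) (m : ℕ) :
    ∃ s α : K, s ≠ 0 ∧ α ≠ 0 ∧ C a * p ^ k = (C s * p) ^ k ∧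
      C b * p ^ m = C α * (C s * p) ^ m := by
  obtain ⟨s, rfl⟩ := IsAlgClosed.exists_pow_nat_eq a (Nat.pos_of_ne_zero hk)
  have hs : s ≠ 0 := fun hs => ha (by simp [hs, hk])
  refine ⟨s, b / s ^ m, hs, div_ne_zero hb (pow_ne_zero _ hs), by rw [mul_pow, map_pow], ?_⟩
  rw [mul_pow, ← mul_assoc, ← map_pow, ← map_mul, div_mul_cancel₀ _ (pow_ne_zero _ hs)]

theorem IsHomogeneous.exists_eq_sq_or_eq_pow_four [IsAlgClosed K] (hp : p.IsHomogeneous 2)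
    (hp0 : p ≠ 0) {a b : K} (ha : a ≠ 0) (hb : b ≠ 0) :
    (∃ (H : MvPolynomial σ K) (α : K), α ≠ 0 ∧ Squarefree H ∧ H.IsHomogeneous 2 ∧
      C a * p ^ 2 = H ^ 2 ∧ C b * p ^ 3 = C α * H ^ 3) ∨
    (∃ (h : MvPolynomial σ K) (α : K), α ≠ 0 ∧ h.IsHomogeneous 1 ∧
      C a * p ^ 2 = h ^ 4 ∧ C b * p ^ 3 = C α * h ^ 6) := by
  by_cases hsq : Squarefree p
  · obtain ⟨s, α, hs, hα, hF, hG⟩ := exists_pow_eq_and_eq_C_mul_pow ha hb p two_ne_zero 3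
    refine Or.inl ⟨C s * p, α, hα, ?_, hp.C_mul s, hF, hG⟩
    exact hsq.squarefree_of_dvd ((isUnit_iff_ne_zero.2 hs).map C |>.mul_left_dvd.2 dvd_rfl)
  · obtain ⟨c, l, hc, hl, rfl⟩ := hp.exists_eq_C_mul_sq_of_not_squarefree hp0 hsq
    obtain ⟨s, α, -, hα, hF, hG⟩ := exists_pow_eq_and_eq_C_mul_pow
      (mul_ne_zero ha (pow_ne_zero 2 hc)) (mul_ne_zero hb (pow_ne_zero 3 hc)) l four_ne_zero 6
    refine Or.inr ⟨C s * l, α, hα, hl.C_mul s, ?_, ?_⟩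
    · rw [← hF, map_mul, map_pow]; ring
    · rw [← hG, map_mul, map_pow]; ring

variable [CharZero K] [Fintype σ]

theorem IsHomogeneous.isUnit_of_forall_dvd_pderiv {n : ℕ} (hp : p.IsHomogeneous n) (hp0 : p ≠ 0)
    (h : ∀ i, p ∣ pderiv i p) : IsUnit p := by
  have hn : n = 0 := by
    by_contra hn
    obtain ⟨i, -, hi⟩ := Finset.exists_ne_zero_of_sum_ne_zero
      (hp.sum_X_mul_pderiv.trans_ne (smul_ne_zero hn hp0))
    have := totalDegree_le_of_dvd_of_isDomain (h i) (right_ne_zero_of_mul hi)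
    have := (hp.pderiv (i := i)).totalDegree_le
    rw [hp.totalDegree hp0] at *
    omega
  subst hn
  have h0 := hp.totalDegree hp0
  refine isUnit_iff_totalDegree_of_isReduced.2 ⟨isUnit_iff_ne_zero.2 fun hc => hp0 ?_, h0⟩
  rw [totalDegree_eq_zero_iff_eq_C.1 h0, hc, C_0]

theorem IsHomogeneous.associated_of_mul_pderiv_eq {m n : ℕ} (hp : p.IsHomogeneous m)
    (hq : q.IsHomogeneous n) (hp0 : p ≠ 0) (hq0 : q ≠ 0)
    (h : ∀ i, q * pderiv i p = p * pderiv i q) : Associated p q := by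
  obtain ⟨a, b, c, hab, rfl, rfl⟩ := UniqueFactorizationMonoid.exists_reduced_factors' p q hq0
  have hc : c ≠ 0 := left_ne_zero_of_mul hp0
  have ha : a ≠ 0 := right_ne_zero_of_mul hp0
  have hb : b ≠ 0 := right_ne_zero_of_mul hq0
  have h' : ∀ i, b * pderiv i a = a * pderiv i b := fun i => by
    have hi := h i
    rw [pderiv_mul, pderiv_mul] at hi
    exact mul_left_cancel₀ (pow_ne_zero 2 hc) (by linear_combination hi)
  obtain ⟨_, _, _, _, ha'⟩ := hp.exists_of_mul hc ha
  obtain ⟨_, _, _, _, hb'⟩ := hq.exists_of_mul hc hb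
  have hua := ha'.isUnit_of_forall_dvd_pderiv ha fun i => hab.dvd_of_dvd_mul_left ⟨_, h' i⟩
  have hub := hb'.isUnit_of_forall_dvd_pderiv hb fun i =>
    hab.symm.dvd_of_dvd_mul_left ⟨_, (h' i).symm⟩
  exact (associated_mul_unit_right c a hua).symm.trans (associated_mul_unit_right c b hub)

end Field

end MvPolynomial

section JacobianMinor

variable {f g F G : MvPolynomial (Fin 3) ℂ} {m n : ℕ}

theorem totalDegree_jacMinor_le (f g : MvPolynomial (Fin 3) ℂ) (i j : Fin 3) :
    (jacMinor f g i j).totalDegree ≤ (f.totalDegree - 1) + (g.totalDegree - 1) := by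
  have hmul (a b : Fin 3) : (pderiv a f * pderiv b g).totalDegree ≤
      (f.totalDegree - 1) + (g.totalDegree - 1) :=
    (totalDegree_mul _ _).trans (add_le_add (totalDegree_pderiv_le a) (totalDegree_pderiv_le b))
  exact (totalDegree_sub _ _).trans (max_le (hmul i j) (hmul j i))

theorem isHomogeneous_jacMinor (hf : f.IsHomogeneous m) (hg : g.IsHomogeneous n) (i j : Fin 3) :
    (jacMinor f g i j).IsHomogeneous (m - 1 + (n - 1)) :=
  (hf.pderiv.mul hg.pderiv).sub (hf.pderiv.mul hg.pderiv)

theorem jacMinor_eq_zero_of_totalDegree_jacMinor_add_lt (hm : 2 ≤ m) (hn : 2 ≤ n)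
    (hF : F.IsHomogeneous m) (hG : G.IsHomogeneous n) (hf : f.totalDegree < m)
    (hg : g.totalDegree < n) {i j : Fin 3}
    (h : (jacMinor (f + F) (g + G) i j).totalDegree < m + n - 2) : jacMinor F G i j = 0 := by
  have hgG : (g + G).totalDegree ≤ n := (totalDegree_add _ _).trans (max_le hg.le hG.totalDegree_le)
  have hlow : (jacMinor f (g + G) i j + jacMinor F g i j).totalDegree < m + n - 2 := by
    have h1 := totalDegree_jacMinor_le f (g + G) i j
    have h2 := totalDegree_jacMinor_le F g i j
    have := hF.totalDegree_le
    exact (totalDegree_add _ _).trans_lt (max_lt (by omega) (by omega))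
  have hsplit : jacMinor F G i j =
      jacMinor (f + F) (g + G) i j - (jacMinor f (g + G) i j + jacMinor F g i j) := by
    simp only [jacMinor, map_add]
    ring
  by_contra h0
  have := (isHomogeneous_jacMinor hF hG i j).totalDegree h0
  have := hsplit ▸ (totalDegree_sub _ _).trans_lt (max_lt h hlow)
  omega

end JacobianMinor

theorem stmt3 (F2 F3 F4 G2 G3 G4 G5 G6 : MvPolynomial (Fin 3) ℂ)
    (hF2 : F2.IsHomogeneous 2) (hF3 : F3.IsHomogeneous 3) (hF4 : F4.IsHomogeneous 4)
    (hG2 : G2.IsHomogeneous 2) (hG3 : G3.IsHomogeneous 3) (hG4 : G4.IsHomogeneous 4)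
    (hG5 : G5.IsHomogeneous 5) (hG6 : G6.IsHomogeneous 6)
    (hF4n : F4 ≠ 0) (hG6n : G6 ≠ 0)
    (hbr : ∀ i j : Fin 3, (jacMinor (X 0 + F2 + F3 + F4) (X 2 + G2 + G3 + G4 + G5 + G6) i j).totalDegree < 8) :
    (∃ (H : MvPolynomial (Fin 3) ℂ) (α : ℂ), α ≠ 0 ∧ Squarefree H ∧ H.IsHomogeneous 2 ∧
      F4 = H ^ 2 ∧ G6 = C α * H ^ 3) ∨
    (∃ (h : MvPolynomial (Fin 3) ℂ) (α : ℂ), α ≠ 0 ∧ h.IsHomogeneous 1 ∧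
      F4 = h ^ 4 ∧ G6 = C α * h ^ 6) := by
  have hlowF : (X 0 + F2 + F3).totalDegree < 4 := by
    repeat' refine (totalDegree_add _ _).trans_lt (max_lt ?_ ?_)
    exacts [by simp, hF2.totalDegree_le.trans_lt (by norm_num),
      hF3.totalDegree_le.trans_lt (by norm_num)]
  have hlowG : (X 2 + G2 + G3 + G4 + G5).totalDegree < 6 := by
    repeat' refine (totalDegree_add _ _).trans_lt (max_lt ?_ ?_)
    exacts [by simp, hG2.totalDegree_le.trans_lt (by norm_num),
      hG3.totalDegree_le.trans_lt (by norm_num), hG4.totalDegree_le.trans_lt (by norm_num),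
      hG5.totalDegree_le.trans_lt (by norm_num)]
  have hJ (i j : Fin 3) : pderiv i F4 * pderiv j G6 = pderiv j F4 * pderiv i G6 :=
    sub_eq_zero.1 <| jacMinor_eq_zero_of_totalDegree_jacMinor_add_lt le_add_self le_add_self hF4
      hG6 hlowF hlowG (hbr i j)
  have h32 (i : Fin 3) : 3 • (G6 * pderiv i F4) = 2 • (F4 * pderiv i G6) :=
    nsmul_right_injective two_ne_zero <| by
      simpa only [← mul_nsmul'] using hF4.nsmul_mul_pderiv_eq hG6 hJ i
  have hassoc : Associated (F4 ^ 3) (G6 ^ 2) :=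
    (hF4.pow 3).associated_of_mul_pderiv_eq (hG6.pow 2) (pow_ne_zero _ hF4n) (pow_ne_zero _ hG6n)
      fun i => pow_mul_pderiv_pow_eq three_ne_zero two_ne_zero (h32 i)
  obtain ⟨g, hFg, hGg⟩ :=
    UniqueFactorizationMonoid.exists_associated_pow_of_associated_pow_succ two_ne_zero hassoc
  obtain ⟨a, ha, rfl⟩ := exists_C_mul_eq_of_associated hFg.symm
  obtain ⟨b, hb, rfl⟩ := exists_C_mul_eq_of_associated hGg.symm
  have hg0 : g ≠ 0 := by rintro rfl; simp at hF4n
  have hg : g.IsHomogeneous 2 := hF4.of_C_mul_pow ha two_ne_zero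
  exact hg.exists_eq_sq_or_eq_pow_four hg0 ha hb
end

section
/- Let F = x + F₂ + F₃ + F₄ and G = z + G₂ + ⋯ + G₆ with Fᵢ, Gᵢ ∈ ℂ[x,y,z] homogeneous of degree i. Suppose F₄ = h⁴ and G₆ = αh⁶, where h ≠ 0 is homogeneous of degree 1 and α ∈ ℂ, α ≠ 0. If deg[F,G] < 9, then there exists β ∈ ℂ such that G₅ = (3/2)α·h²·F₃ + β·h⁵. -/
open MvPolynomial

namespace Stmt10Aux

abbrev P3 := MvPolynomial (Fin 3) ℂ

lemma degree_eq_sum_univ (d : Fin 3 →₀ ℕ) : d.degree = ∑ k : Fin 3, d k := by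
  rw [Finsupp.degree]
  exact Finset.sum_subset (Finset.subset_univ _) (by
    intro x _ hx
    simpa using Finsupp.notMem_support_iff.mp hx)

lemma support_degree_eq {p : P3} {n : ℕ} (hp : p.IsHomogeneous n) {d : Fin 3 →₀ ℕ}
    (hd : d ∈ p.support) : d.degree = n := by
  by_contra hne
  exact (MvPolynomial.mem_support_iff.mp hd) (hp.coeff_eq_zero hne)

lemma sub_single_add {d : Fin 3 →₀ ℕ} {i : Fin 3} (hi : d i ≠ 0) :
    (d - Finsupp.single i 1) + Finsupp.single i 1 = d := by
  apply tsub_add_cancel_of_le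
  rw [Finsupp.single_le_iff]
  omega

lemma pderiv_isHomogeneous {p : P3} {n : ℕ} (hp : p.IsHomogeneous (n + 1))
    (i : Fin 3) : (pderiv i p).IsHomogeneous n := by
  rw [p.as_sum, map_sum]
  apply IsHomogeneous.sum
  intro d hd
  rw [pderiv_monomial]
  by_cases h0 : d i = 0
  · simp only [h0, Nat.cast_zero, mul_zero, monomial_zero]
    exact isHomogeneous_zero _ _ n
  · apply isHomogeneous_monomial
    have h1 := sub_single_add h0
    have h2 : ((d - Finsupp.single i 1) + Finsupp.single i 1).degree
        = (d - Finsupp.single i 1).degree + 1 := by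
      rw [degree_eq_sum_univ, degree_eq_sum_univ]
      simp [Finsupp.add_apply, Finset.sum_add_distrib, Finsupp.single_apply]
    have h3 := support_degree_eq hp hd
    rw [h1, h3] at h2
    omega

lemma euler {p : P3} {n : ℕ} (hp : p.IsHomogeneous n) :
    ∑ i : Fin 3, X i * pderiv i p = (C (n : ℂ)) * p := by
  have key : ∀ d ∈ p.support,
      ∑ i : Fin 3, X i * pderiv i (monomial d (coeff d p))
        = C (n : ℂ) * monomial d (coeff d p) := by
    intro d hd
    have h1 : ∀ i : Fin 3, X i * pderiv i (monomial d (coeff d p))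
        = monomial d (coeff d p * (d i : ℂ)) := by
      intro i
      rw [pderiv_monomial]
      by_cases h0 : d i = 0
      · simp [h0]
      · rw [X, monomial_mul, one_mul, add_comm, sub_single_add h0]
    simp only [h1]
    rw [← map_sum, ← Finset.mul_sum, C_mul_monomial]
    congr 1
    have h3 := support_degree_eq hp hd
    rw [degree_eq_sum_univ] at h3
    rw [mul_comm]
    congr 1
    rw [← h3]
    push_cast
    rfl
  have step : ∑ i : Fin 3, X i * pderiv i p
      = ∑ d ∈ p.support, ∑ i : Fin 3, X i * pderiv i (monomial d (coeff d p)) := by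
    rw [Finset.sum_comm]
    refine Finset.sum_congr rfl fun i _ => ?_
    conv_lhs => rw [p.as_sum]
    rw [map_sum, Finset.mul_sum]
  rw [step, Finset.sum_congr rfl key, ← Finset.mul_sum, ← p.as_sum]


lemma eq_C_of_isHomogeneous_zero {p : P3} (hp : p.IsHomogeneous 0) : p = C (coeff 0 p) := by
  have h1 := homogeneousComponent_of_mem ((mem_homogeneousSubmodule 0 p).mpr hp) (m := 0) (n := 0)
  rw [if_pos rfl] at h1
  exact h1.symm.trans (homogeneousComponent_zero p)

lemma key (h : P3) (hh : h ≠ 0) (hhom : h.IsHomogeneous 1) :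
    ∀ (n : ℕ) (Q : P3), Q.IsHomogeneous n →
      (∀ i j : Fin 3, pderiv i h * pderiv j Q = pderiv j h * pderiv i Q) →
      ∃ β : ℂ, Q = C β * h ^ n := by
  intro n
  induction n with
  | zero =>
    intro Q hQ _
    exact ⟨coeff 0 Q, by rw [pow_zero, mul_one]; exact eq_C_of_isHomogeneous_zero hQ⟩
  | succ n ih =>
    intro Q hQ hW
    have hconst : ∀ k : Fin 3, pderiv k h = C (coeff 0 (pderiv k h)) := fun k =>
      eq_C_of_isHomogeneous_zero (pderiv_isHomogeneous hhom k)
    have hex : ∃ k : Fin 3, coeff 0 (pderiv k h) ≠ 0 := by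
      by_contra hall
      push_neg at hall
      have hz : ∀ k : Fin 3, pderiv k h = 0 := fun k => by rw [hconst k, hall k, map_zero]
      have he := euler hhom
      simp only [hz, mul_zero, Finset.sum_const_zero, Nat.cast_one, map_one, one_mul] at he
      exact hh he.symm
    obtain ⟨k, hk⟩ := hex
    set c := coeff 0 (pderiv k h) with hcdef
    have key1 : C (c * ((n + 1 : ℕ) : ℂ)) * Q = h * pderiv k Q := by
      have heQ := euler hQ
      rw [map_mul, mul_assoc, ← heQ, Finset.mul_sum]
      have h1 : ∀ j ∈ Finset.univ, C c * (X j * pderiv j Q)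
          = X j * pderiv j h * pderiv k Q := by
        intro j _
        rw [← hconst k, mul_left_comm, hW k j]
        ring
      rw [Finset.sum_congr rfl h1, ← Finset.sum_mul]
      have h2 : ∑ j : Fin 3, X j * pderiv j h = C ((1 : ℕ) : ℂ) * h := euler hhom
      rw [h2]
      simp
    have hcn : (c * ((n + 1 : ℕ) : ℂ)) ≠ 0 := by
      apply mul_ne_zero hk
      exact_mod_cast Nat.succ_ne_zero n
    set R : P3 := C ((c * ((n + 1 : ℕ) : ℂ))⁻¹) * pderiv k Q with hRdef
    have hQeq : Q = h * R := by
      rw [hRdef]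
      calc Q = C ((c * ((n + 1 : ℕ) : ℂ))⁻¹) * (C (c * ((n + 1 : ℕ) : ℂ)) * Q) := by
            rw [← mul_assoc, ← map_mul, inv_mul_cancel₀ hcn, map_one, one_mul]
        _ = C ((c * ((n + 1 : ℕ) : ℂ))⁻¹) * (h * pderiv k Q) := by rw [key1]
        _ = h * (C ((c * ((n + 1 : ℕ) : ℂ))⁻¹) * pderiv k Q) := by ring
    have hRhom : R.IsHomogeneous n :=
      (pderiv_isHomogeneous hQ k).C_mul _
    have hWR : ∀ i j : Fin 3, pderiv i h * pderiv j R = pderiv j h * pderiv i R := by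
      intro i j
      have h2 := hW i j
      rw [hQeq] at h2
      simp only [pderiv_mul] at h2
      have h3 : h * (pderiv i h * pderiv j R) = h * (pderiv j h * pderiv i R) := by
        linear_combination h2
      exact mul_left_cancel₀ hh h3
    obtain ⟨β, hβ⟩ := ih R hRhom hWR
    exact ⟨β, by rw [hQeq, hβ, pow_succ]; ring⟩


lemma natCast_C (n : ℕ) : ((n : ℕ) : P3) = C ((n : ℕ) : ℂ) := (map_natCast C n).symm

lemma jac_add_left (p q r : P3) (i j : Fin 3) :
    jacMinor (p + q) r i j = jacMinor p r i j + jacMinor q r i j := by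
  simp only [jacMinor, map_add]; ring

lemma jac_add_right (p q r : P3) (i j : Fin 3) :
    jacMinor p (q + r) i j = jacMinor p q i j + jacMinor p r i j := by
  simp only [jacMinor, map_add]; ring

lemma pderiv_isHomogeneous' {p : P3} {n : ℕ} (hp : p.IsHomogeneous n) (hn : n ≠ 0)
    (i : Fin 3) : (pderiv i p).IsHomogeneous (n - 1) := by
  obtain ⟨m, rfl⟩ := Nat.exists_eq_succ_of_ne_zero hn
  simpa using pderiv_isHomogeneous hp i

lemma jac_isHomogeneous {p q : P3} {a b : ℕ} (hp : p.IsHomogeneous a) (hq : q.IsHomogeneous b)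
    (ha : a ≠ 0) (hb : b ≠ 0) (i j : Fin 3) :
    (jacMinor p q i j).IsHomogeneous (a - 1 + (b - 1)) :=
  ((pderiv_isHomogeneous' hp ha i).mul (pderiv_isHomogeneous' hq hb j)).sub
    (by simpa [add_comm] using (pderiv_isHomogeneous' hp ha j).mul (pderiv_isHomogeneous' hq hb i))

lemma hc7_ne {p q : P3} {a b : ℕ} (hp : p.IsHomogeneous a) (hq : q.IsHomogeneous b)
    (ha : a ≠ 0) (hb : b ≠ 0) (hab : a + b ≠ 9) (i j : Fin 3) :
    homogeneousComponent 7 (jacMinor p q i j) = 0 := by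
  rw [homogeneousComponent_of_mem
    ((mem_homogeneousSubmodule _ _).mpr (jac_isHomogeneous hp hq ha hb i j))]
  rw [if_neg (by omega)]

lemma hc7_eq {p q : P3} {a b : ℕ} (hp : p.IsHomogeneous a) (hq : q.IsHomogeneous b)
    (ha : a ≠ 0) (hb : b ≠ 0) (hab : a + b = 9) (i j : Fin 3) :
    homogeneousComponent 7 (jacMinor p q i j) = jacMinor p q i j := by
  rw [homogeneousComponent_of_mem
    ((mem_homogeneousSubmodule _ _).mpr (jac_isHomogeneous hp hq ha hb i j))]
  rw [if_pos (by omega)]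

end Stmt10Aux

open Stmt10Aux in
theorem stmt10 (F2 F3 F4 G2 G3 G4 G5 G6 h : MvPolynomial (Fin 3) ℂ) (α : ℂ)
    (hF2 : F2.IsHomogeneous 2) (hF3 : F3.IsHomogeneous 3) (hF4 : F4.IsHomogeneous 4)
    (hG2 : G2.IsHomogeneous 2) (hG3 : G3.IsHomogeneous 3) (hG4 : G4.IsHomogeneous 4)
    (hG5 : G5.IsHomogeneous 5) (hG6 : G6.IsHomogeneous 6)
    (hh : h ≠ 0) (hhhom : h.IsHomogeneous 1) (hα : α ≠ 0)
    (hF4eq : F4 = h ^ 4) (hG6eq : G6 = C α * h ^ 6)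
    (hbr : ∀ i j : Fin 3, (jacMinor (X 0 + F2 + F3 + F4) (X 2 + G2 + G3 + G4 + G5 + G6) i j).totalDegree < 7) :
    ∃ β : ℂ, G5 = C ((3 / 2) * α) * h ^ 2 * F3 + C β * h ^ 5 := by
  have hX0 : (X 0 : P3).IsHomogeneous 1 := isHomogeneous_X _ _
  have hX2 : (X 2 : P3).IsHomogeneous 1 := isHomogeneous_X _ _
  have hstep : ∀ i j : Fin 3, jacMinor F3 G6 i j + jacMinor F4 G5 i j = 0 := by
    intro i j
    have h0 := homogeneousComponent_eq_zero _ _ (hbr i j)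
    simp only [jac_add_left, jac_add_right, map_add] at h0
    rw [hc7_eq hF3 hG6 (by norm_num) (by norm_num) (by norm_num),
        hc7_eq hF4 hG5 (by norm_num) (by norm_num) (by norm_num),
        hc7_ne hX0 hX2 (by norm_num) (by norm_num) (by norm_num),
        hc7_ne hX0 hG2 (by norm_num) (by norm_num) (by norm_num),
        hc7_ne hX0 hG3 (by norm_num) (by norm_num) (by norm_num),
        hc7_ne hX0 hG4 (by norm_num) (by norm_num) (by norm_num),
        hc7_ne hX0 hG5 (by norm_num) (by norm_num) (by norm_num),
        hc7_ne hX0 hG6 (by norm_num) (by norm_num) (by norm_num),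
        hc7_ne hF2 hX2 (by norm_num) (by norm_num) (by norm_num),
        hc7_ne hF2 hG2 (by norm_num) (by norm_num) (by norm_num),
        hc7_ne hF2 hG3 (by norm_num) (by norm_num) (by norm_num),
        hc7_ne hF2 hG4 (by norm_num) (by norm_num) (by norm_num),
        hc7_ne hF2 hG5 (by norm_num) (by norm_num) (by norm_num),
        hc7_ne hF2 hG6 (by norm_num) (by norm_num) (by norm_num),
        hc7_ne hF3 hX2 (by norm_num) (by norm_num) (by norm_num),
        hc7_ne hF3 hG2 (by norm_num) (by norm_num) (by norm_num),
        hc7_ne hF3 hG3 (by norm_num) (by norm_num) (by norm_num),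
        hc7_ne hF3 hG4 (by norm_num) (by norm_num) (by norm_num),
        hc7_ne hF3 hG5 (by norm_num) (by norm_num) (by norm_num),
        hc7_ne hF4 hX2 (by norm_num) (by norm_num) (by norm_num),
        hc7_ne hF4 hG2 (by norm_num) (by norm_num) (by norm_num),
        hc7_ne hF4 hG3 (by norm_num) (by norm_num) (by norm_num),
        hc7_ne hF4 hG4 (by norm_num) (by norm_num) (by norm_num),
        hc7_ne hF4 hG6 (by norm_num) (by norm_num) (by norm_num)] at h0
    linear_combination h0
  -- derive the cancelled bracket relation
  have hcancel : ∀ i j : Fin 3,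
      C (4 : ℂ) * (pderiv i h * pderiv j G5 - pderiv j h * pderiv i G5)
        - C (6 * α) * h ^ 2 * (pderiv i h * pderiv j F3 - pderiv j h * pderiv i F3) = 0 := by
    intro i j
    have h1 := hstep i j
    rw [hF4eq, hG6eq] at h1
    have h2 : h ^ 3 * (C (4 : ℂ) * (pderiv i h * pderiv j G5 - pderiv j h * pderiv i G5)
        - C (6 * α) * h ^ 2 * (pderiv i h * pderiv j F3 - pderiv j h * pderiv i F3))
        = jacMinor F3 (C α * h ^ 6) i j + jacMinor (h ^ 4) G5 i j := by
      simp only [jacMinor, pderiv_C_mul, pderiv_pow, map_mul]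
      have e4 : ((4 : ℕ) : P3) = C (4 : ℂ) := by rw [natCast_C]; norm_num
      have e6 : ((6 : ℕ) : P3) = C (6 : ℂ) := by rw [natCast_C]; norm_num
      rw [e4, e6]
      ring
    rw [h1] at h2
    rcases mul_eq_zero.mp h2 with h3 | h3
    · exact absurd h3 (pow_ne_zero 3 hh)
    · exact h3
  set Q : P3 := C (4 : ℂ) * G5 - C (6 * α) * h ^ 2 * F3 with hQdef
  have hQhom : Q.IsHomogeneous 5 := by
    apply (hG5.C_mul _).sub
    have : ((h ^ 2) * F3).IsHomogeneous 5 := by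
      have := (hhhom.pow 2).mul hF3
      simpa using this
    simpa [mul_assoc] using this.C_mul (6 * α)
  have hWQ : ∀ i j : Fin 3, pderiv i h * pderiv j Q = pderiv j h * pderiv i Q := by
    intro i j
    simp only [hQdef, map_sub, pderiv_mul, pderiv_C_mul, pderiv_C, pderiv_pow,
      zero_mul, mul_zero, zero_add, add_zero, sub_zero, zero_sub]
    have e2 : ((2 : ℕ) : P3) = C (2 : ℂ) := by rw [natCast_C]; norm_num
    rw [e2]
    linear_combination hcancel i j
  obtain ⟨β', hβ'⟩ := key h hh hhhom 5 Q hQhom hWQ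
  refine ⟨β' / 4, ?_⟩
  have hC4 : (C (4 : ℂ) : P3) ≠ 0 := by
    simp only [ne_eq, MvPolynomial.C_eq_zero]
    norm_num
  apply mul_left_cancel₀ hC4
  have expand : C (4 : ℂ) * (C ((3 / 2) * α) * h ^ 2 * F3 + C (β' / 4) * h ^ 5)
      = C (6 * α) * h ^ 2 * F3 + C β' * h ^ 5 := by
    have e1 : (4 : ℂ) * ((3 / 2) * α) = 6 * α := by ring
    have e2 : (4 : ℂ) * (β' / 4) = β' := by ring
    rw [mul_add, ← mul_assoc, ← mul_assoc, ← map_mul, e1, ← mul_assoc, ← map_mul, e2]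
    try ring
  rw [expand]
  have := hβ'
  rw [hQdef] at this
  linear_combination this
end

section
/- Let F = x + F₂ + F₃ + F₄ and G = z + G₂ + ⋯ + G₆ with Fᵢ, Gᵢ ∈ ℂ[x,y,z] homogeneous of degree i. Suppose F₄ = h⁴, G₆ = αh⁶ and G₅ = (3/2)αh²F₃ + βh⁵, where h ≠ 0 is homogeneous of degree 1, α ∈ ℂ with α ≠ 0, and β ∈ ℂ. If deg[F,G] < 8, then there exist a homogeneous polynomial F̃₂ of degree 2 and a ∈ ℂ such that F₃ = h·F̃₂, G₅ = (3/2)αh³F̃₂ + βh⁵, and G₄ = (3/8)α·F̃₂² + (5/4)β·h²·F̃₂ + (3/2)α·h²·F₂ + (1/4)a·h⁴. -/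
/-!
Only the pairs (F₂, G₆), (F₃, G₅), (F₄, G₄) contribute to the degree-6 part of [F, G], so
J(F₂, G₆) + J(F₃, G₅) + J(F₄, G₄) = 0 for every minor J. Substituting F₄ = h⁴, G₆ = αh⁶ and
the given G₅, this identity is divisible by h and shows h ∣ F₃ · J(F₃, h). Contracting the
minors Jᵢⱼ(F₃, h) with the variables xᵢ (Euler's identity) turns this into h ∣ 3 ∂ⱼh · F₃²,
where ∂ⱼh is a nonzero constant for a suitable j, and h is prime, so F₃ = h F̃₂. Substituting
once more, the identity becomes 4h³ J(h, Q) = 0 for Q = G₄ − (3/8)αF̃₂² − (5/4)βh²F̃₂ − (3/2)αh²F₂.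
A form Q of degree n with J(h, Q) = 0 is a multiple of hⁿ: Euler's identity gives
n ∂ⱼh · Q = h ∂ⱼQ, so h ∣ Q and one inducts on n.
-/

open MvPolynomial

namespace MvPolynomial

variable {σ R : Type*} [CommSemiring R]

theorem C_mul_ofNat_eq_ofNat_mul_C {a b : R} (p q : ℕ) [p.AtLeastTwo] [q.AtLeastTwo]
    (hab : a * OfNat.ofNat p = OfNat.ofNat q * b) :
    (C a : MvPolynomial σ R) * OfNat.ofNat p = OfNat.ofNat q * C b := by
  rw [← map_ofNat C p, ← map_ofNat C q, ← C_mul, ← C_mul, hab]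

section Homogeneous

variable {f g : MvPolynomial σ R} {m n : ℕ}

attribute [local instance] gradedAlgebra in
theorem IsHomogeneous.homogeneousComponent_mul_left (hf : f.IsHomogeneous m) (n : ℕ) :
    homogeneousComponent (m + n) (f * g) = f * homogeneousComponent n g := by
  have := DirectSum.coe_decompose_mul_of_left_mem_of_le (b := g) (homogeneousSubmodule σ R)
    ((mem_homogeneousSubmodule m f).mpr hf) (Nat.le_add_right m n)
  rw [Nat.add_sub_cancel_left] at this
  rw [← decomposition.decompose'_apply, ← decomposition.decompose'_apply]
  exact this

theorem IsHomogeneous.exists_eq_mul_of_dvd (hf : f.IsHomogeneous m)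
    (hg : g.IsHomogeneous (m + n)) (hdvd : f ∣ g) : ∃ q, q.IsHomogeneous n ∧ g = f * q := by
  obtain ⟨q, rfl⟩ := hdvd
  exact ⟨homogeneousComponent n q, homogeneousComponent_isHomogeneous n q,
    by rw [← hf.homogeneousComponent_mul_left, homogeneousComponent_eq_self hg]⟩

theorem IsHomogeneous.eq_C_of_degree_zero (hf : f.IsHomogeneous 0) : f = C (coeff 0 f) :=
  totalDegree_eq_zero_iff_eq_C.mp ((totalDegree_zero_iff_isHomogeneous (p := f)).mpr hf)

theorem IsHomogeneous.pderiv_eq_zero (hf : f.IsHomogeneous 0) (i : σ) : pderiv i f = 0 := by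
  rw [hf.eq_C_of_degree_zero, pderiv_C]

end Homogeneous

section LinearForms

variable {K : Type*} [Field K] {h : MvPolynomial σ K}

theorem IsHomogeneous.prime_of_degree_one (hh : h.IsHomogeneous 1) (h0 : h ≠ 0) : Prime h := by
  refine (irreducible_of_totalDegree_eq_one (hh.totalDegree h0) fun x hx => ?_).prime
  refine isUnit_iff_ne_zero.mpr fun hx0 => h0 ?_
  ext d
  simpa [hx0] using hx d

theorem IsHomogeneous.exists_pderiv_eq_C [Fintype σ] (hh : h.IsHomogeneous 1) (h0 : h ≠ 0) :
    ∃ j c, c ≠ 0 ∧ pderiv j h = C c := by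
  by_contra! hall
  have hpd (j : σ) : pderiv j h = 0 := by
    have hj := (hh.pderiv (i := j)).eq_C_of_degree_zero
    by_contra hne
    exact hall j _ (fun hc => hne (by rw [hj, hc, map_zero])) hj
  exact h0 (by simpa [hpd] using hh.sum_X_mul_pderiv.symm)

end LinearForms

end MvPolynomial

section JacobianMinor

variable {f g h : MvPolynomial (Fin 3) ℂ} {m n : ℕ}

theorem MvPolynomial.IsHomogeneous.jacMinor (hf : f.IsHomogeneous m) (hg : g.IsHomogeneous n)
    (i j : Fin 3) : (jacMinor f g i j).IsHomogeneous (m + n - 2) := by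
  rcases Nat.eq_zero_or_pos m with rfl | hm
  · simp [_root_.jacMinor, hf.pderiv_eq_zero, isHomogeneous_zero]
  rcases Nat.eq_zero_or_pos n with rfl | hn
  · simp [_root_.jacMinor, hg.pderiv_eq_zero, isHomogeneous_zero]
  rw [show m + n - 2 = (m - 1) + (n - 1) by omega]
  exact (hf.pderiv.mul hg.pderiv).sub (hf.pderiv.mul hg.pderiv)

theorem homogeneousComponent_jacMinor (hf : f.IsHomogeneous m) (hg : g.IsHomogeneous n)
    (k : ℕ) (i j : Fin 3) :
    homogeneousComponent k (jacMinor f g i j) = if k + 2 = m + n then jacMinor f g i j else 0 := by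
  rcases Nat.eq_zero_or_pos m with rfl | hm
  · simp [jacMinor, hf.pderiv_eq_zero]
  rcases Nat.eq_zero_or_pos n with rfl | hn
  · simp [jacMinor, hg.pderiv_eq_zero]
  rw [homogeneousComponent_of_mem ((mem_homogeneousSubmodule _ _).mpr (hf.jacMinor hg i j))]
  exact if_congr (by omega) rfl rfl

theorem jacMinor_sum_sum {ι κ : Type*} (s : Finset ι) (t : Finset κ)
    (f : ι → MvPolynomial (Fin 3) ℂ) (g : κ → MvPolynomial (Fin 3) ℂ) (i j : Fin 3) :
    jacMinor (∑ a ∈ s, f a) (∑ b ∈ t, g b) i j = ∑ a ∈ s, ∑ b ∈ t, jacMinor (f a) (g b) i j := by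
  simp only [jacMinor, map_sum, Finset.sum_mul_sum, ← Finset.sum_sub_distrib]

theorem homogeneousComponent_jacMinor_sum {ι κ : Type*} (s : Finset ι) (t : Finset κ)
    (f : ι → MvPolynomial (Fin 3) ℂ) (g : κ → MvPolynomial (Fin 3) ℂ) (m : ι → ℕ) (n : κ → ℕ)
    (hf : ∀ a, (f a).IsHomogeneous (m a)) (hg : ∀ b, (g b).IsHomogeneous (n b))
    (k : ℕ) (i j : Fin 3) :
    homogeneousComponent k (jacMinor (∑ a ∈ s, f a) (∑ b ∈ t, g b) i j) =
      ∑ a ∈ s, ∑ b ∈ t, if k + 2 = m a + n b then jacMinor (f a) (g b) i j else 0 := by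
  simp only [jacMinor_sum_sum, map_sum, homogeneousComponent_jacMinor (hf _) (hg _)]

theorem sum_X_mul_jacMinor (hf : f.IsHomogeneous m) (hg : g.IsHomogeneous n) (j : Fin 3) :
    ∑ i, X i * jacMinor f g i j = m * f * pderiv j g - n * g * pderiv j f := by
  have ef := hf.sum_X_mul_pderiv
  have eg := hg.sum_X_mul_pderiv
  rw [nsmul_eq_mul] at ef eg
  rw [← ef, ← eg, Finset.sum_mul, Finset.sum_mul, ← Finset.sum_sub_distrib]
  exact Finset.sum_congr rfl fun i _ => by simp only [jacMinor]; ring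

theorem jacMinor_mul_right_self (h q : MvPolynomial (Fin 3) ℂ) (i j : Fin 3) :
    jacMinor h (h * q) i j = h * jacMinor h q i j := by
  simp only [jacMinor, Derivation.leibniz, smul_eq_mul]
  ring

theorem dvd_of_forall_dvd_mul_jacMinor (hh : h.IsHomogeneous 1) (h0 : h ≠ 0)
    (hf : f.IsHomogeneous m) (hm : m ≠ 0) (hdvd : ∀ i j, h ∣ f * jacMinor f h i j) : h ∣ f := by
  obtain ⟨j, c, hc, hj⟩ := hh.exists_pderiv_eq_C h0
  have key : C ((m : ℂ) * c) * (f * f) =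
      ∑ i, X i * (f * jacMinor f h i j) + h * (f * pderiv j f) := by
    simp_rw [mul_left_comm (X _) f, ← Finset.mul_sum, sum_X_mul_jacMinor hf hh, hj]
    simp only [map_mul, map_natCast, Nat.cast_one]
    ring
  have hsq : h ∣ f * f := by
    refine (((mul_ne_zero (Nat.cast_ne_zero.mpr hm) hc).isUnit).map C).dvd_mul_left.mp ?_
    rw [key]
    exact dvd_add (Finset.dvd_sum fun i _ => (hdvd i j).mul_left _) (dvd_mul_right h _)
  exact ((hh.prime_of_degree_one h0).dvd_or_dvd hsq).elim id id

theorem eq_C_mul_pow_of_jacMinor_eq_zero (hh : h.IsHomogeneous 1) (h0 : h ≠ 0) {n : ℕ}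
    {q : MvPolynomial (Fin 3) ℂ} (hq : q.IsHomogeneous n) (hJ : ∀ i j, jacMinor h q i j = 0) :
    ∃ a, q = C a * h ^ n := by
  induction n generalizing q with
  | zero => exact ⟨coeff 0 q, by rw [pow_zero, mul_one]; exact hq.eq_C_of_degree_zero⟩
  | succ n ih =>
    obtain ⟨j, c, hc, hj⟩ := hh.exists_pderiv_eq_C h0
    have hu : ((n + 1 : ℕ) : ℂ) * c ≠ 0 := mul_ne_zero (Nat.cast_ne_zero.mpr n.succ_ne_zero) hc
    set q' := C (((n + 1 : ℕ) : ℂ) * c)⁻¹ * pderiv j q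
    have euler : h * pderiv j q = C (((n + 1 : ℕ) : ℂ) * c) * q := by
      have := sum_X_mul_jacMinor hh hq j
      simp only [hJ, mul_zero, Finset.sum_const_zero, hj] at this
      rw [map_mul, map_natCast]
      linear_combination (-1 : MvPolynomial (Fin 3) ℂ) * this
    have hq_eq : q = h * q' := by
      rw [mul_left_comm, euler, ← mul_assoc, ← C_mul, inv_mul_cancel₀ hu, C_1, one_mul]
    have hq' : q'.IsHomogeneous n := by simpa using hq.pderiv.C_mul _
    have hJ' (i j : Fin 3) : jacMinor h q' i j = 0 := by
      have := hJ i j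
      rwa [hq_eq, jacMinor_mul_right_self, mul_eq_zero, or_iff_right h0] at this
    obtain ⟨a, ha⟩ := ih hq' hJ'
    exact ⟨a, by rw [hq_eq, ha]; ring⟩

end JacobianMinor

section DegreeSixPart

variable {F2 F3 F4 G2 G3 G4 G5 G6 h : MvPolynomial (Fin 3) ℂ} {α β : ℂ}

theorem add_jacMinor_eq_zero_of_totalDegree_lt (hF2 : F2.IsHomogeneous 2)
    (hF3 : F3.IsHomogeneous 3) (hF4 : F4.IsHomogeneous 4) (hG2 : G2.IsHomogeneous 2)
    (hG3 : G3.IsHomogeneous 3) (hG4 : G4.IsHomogeneous 4) (hG5 : G5.IsHomogeneous 5)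
    (hG6 : G6.IsHomogeneous 6) {i j : Fin 3}
    (hbr : (jacMinor (X 0 + F2 + F3 + F4) (X 2 + G2 + G3 + G4 + G5 + G6) i j).totalDegree < 6) :
    jacMinor F2 G6 i j + jacMinor F3 G5 i j + jacMinor F4 G4 i j = 0 := by
  have hF : X 0 + F2 + F3 + F4 = ∑ a, ![X 0, F2, F3, F4] a := by simp [Fin.sum_univ_four]
  have hG : X 2 + G2 + G3 + G4 + G5 + G6 = ∑ b, ![X 2, G2, G3, G4, G5, G6] b := by
    simp [Fin.sum_univ_six]
  have hcomp := homogeneousComponent_jacMinor_sum Finset.univ Finset.univ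
    ![X 0, F2, F3, F4] ![X 2, G2, G3, G4, G5, G6] (fun a => a + 1) (fun b => b + 1)
    (by simp [Fin.forall_fin_succ, isHomogeneous_X, hF2, hF3, hF4])
    (by simp [Fin.forall_fin_succ, isHomogeneous_X, hG2, hG3, hG4, hG5, hG6]) 6 i j
  rw [← hF, ← hG, homogeneousComponent_eq_zero _ _ hbr] at hcomp
  simpa [Fin.sum_univ_succ, add_assoc] using hcomp.symm

theorem dvd_mul_jacMinor_of_add_eq_zero (hh : h ≠ 0) (hα : α ≠ 0) {i j : Fin 3}
    (hE : jacMinor F2 (C α * h ^ 6) i j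
      + jacMinor F3 (C ((3 / 2) * α) * h ^ 2 * F3 + C β * h ^ 5) i j
      + jacMinor (h ^ 4) G4 i j = 0) :
    h ∣ F3 * jacMinor F3 h i j := by
  have c3 : (C (3 * α) : MvPolynomial (Fin 3) ℂ) = 3 * C α := by rw [C_mul, map_ofNat]
  have c32 : (C ((3 / 2) * α) : MvPolynomial (Fin 3) ℂ) * 2 = 3 * C α :=
    C_mul_ofNat_eq_ofNat_mul_C 2 3 (by ring)
  have hfac : h * (C (3 * α) * (F3 * jacMinor F3 h i j) + h * (C α * 6 * h ^ 3 * jacMinor F2 h i j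
      + C β * 5 * h ^ 2 * jacMinor F3 h i j + 4 * h * jacMinor h G4 i j)) = 0 := by
    rw [← hE]
    simp only [jacMinor, map_add, pderiv_mul, pderiv_pow, pderiv_C]
    push_cast
    linear_combination (h * F3 * (pderiv i F3 * pderiv j h - pderiv j F3 * pderiv i h)) * (c3 - c32)
  have hsum := (mul_eq_zero.mp hfac).resolve_left hh
  exact ((mul_ne_zero three_ne_zero hα).isUnit.map C).dvd_mul_left.mp
    ⟨_, (eq_neg_of_add_eq_zero_left hsum).trans (mul_neg _ _).symm⟩

theorem jacMinor_sub_eq_zero_of_add_eq_zero (hh : h ≠ 0) {i j : Fin 3}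
    (hE : jacMinor F2 (C α * h ^ 6) i j
      + jacMinor (h * F3) (C ((3 / 2) * α) * h ^ 2 * (h * F3) + C β * h ^ 5) i j
      + jacMinor (h ^ 4) G4 i j = 0) :
    jacMinor h (G4 - C ((3 / 8) * α) * F3 ^ 2 - C ((5 / 4) * β) * h ^ 2 * F3
      - C ((3 / 2) * α) * h ^ 2 * F2) i j = 0 := by
  have c32 : (C ((3 / 2) * α) : MvPolynomial (Fin 3) ℂ) * 2 = 3 * C α :=
    C_mul_ofNat_eq_ofNat_mul_C 2 3 (by ring)
  have c38 : (C ((3 / 8) * α) : MvPolynomial (Fin 3) ℂ) * 8 = 3 * C α :=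
    C_mul_ofNat_eq_ofNat_mul_C 8 3 (by ring)
  have c54 : (C ((5 / 4) * β) : MvPolynomial (Fin 3) ℂ) * 4 = 5 * C β :=
    C_mul_ofNat_eq_ofNat_mul_C 4 5 (by ring)
  have hfac : h ^ 3 * 4 * jacMinor h (G4 - C ((3 / 8) * α) * F3 ^ 2
      - C ((5 / 4) * β) * h ^ 2 * F3 - C ((3 / 2) * α) * h ^ 2 * F2) i j = 0 := by
    rw [← hE]
    simp only [jacMinor, map_add, map_sub, pderiv_mul, pderiv_pow, pderiv_C]
    push_cast
    linear_combination
      (h ^ 3 * F3 * (pderiv i F3 * pderiv j h - pderiv j F3 * pderiv i h)) * (c38 - c32)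
      + (2 * h ^ 5 * (pderiv i F2 * pderiv j h - pderiv j F2 * pderiv i h)) * c32
      + (h ^ 5 * (pderiv i F3 * pderiv j h - pderiv j F3 * pderiv i h)) * c54
  exact (mul_eq_zero.mp hfac).resolve_left (mul_ne_zero (pow_ne_zero 3 hh) (by norm_num))

end DegreeSixPart

theorem stmt11 (F2 F3 F4 G2 G3 G4 G5 G6 h : MvPolynomial (Fin 3) ℂ) (α β : ℂ)
    (hF2 : F2.IsHomogeneous 2) (hF3 : F3.IsHomogeneous 3) (hF4 : F4.IsHomogeneous 4)
    (hG2 : G2.IsHomogeneous 2) (hG3 : G3.IsHomogeneous 3) (hG4 : G4.IsHomogeneous 4)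
    (hG5 : G5.IsHomogeneous 5) (hG6 : G6.IsHomogeneous 6)
    (hh : h ≠ 0) (hhhom : h.IsHomogeneous 1) (hα : α ≠ 0)
    (hF4eq : F4 = h ^ 4) (hG6eq : G6 = C α * h ^ 6)
    (hG5eq : G5 = C ((3 / 2) * α) * h ^ 2 * F3 + C β * h ^ 5)
    (hbr : ∀ i j : Fin 3, (jacMinor (X 0 + F2 + F3 + F4) (X 2 + G2 + G3 + G4 + G5 + G6) i j).totalDegree < 6) :
    ∃ (F2t : MvPolynomial (Fin 3) ℂ) (a : ℂ), F2t.IsHomogeneous 2 ∧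
      F3 = h * F2t ∧
      G5 = C ((3 / 2) * α) * h ^ 3 * F2t + C β * h ^ 5 ∧
      G4 = C ((3 / 8) * α) * F2t ^ 2 + C ((5 / 4) * β) * h ^ 2 * F2t
        + C ((3 / 2) * α) * h ^ 2 * F2 + C ((1 / 4) * a) * h ^ 4 := by
  have hE (i j : Fin 3) := add_jacMinor_eq_zero_of_totalDegree_lt hF2 hF3 hF4 hG2 hG3 hG4 hG5 hG6
    (hbr i j)
  rw [hF4eq, hG6eq, hG5eq] at hE
  obtain ⟨F2t, hF2t, hF3eq⟩ := hhhom.exists_eq_mul_of_dvd (n := 2) hF3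
    (dvd_of_forall_dvd_mul_jacMinor hhhom hh hF3 three_ne_zero
      fun i j => dvd_mul_jacMinor_of_add_eq_zero hh hα (hE i j))
  rw [hF3eq] at hE
  have hQ : (G4 - C ((3 / 8) * α) * F2t ^ 2 - C ((5 / 4) * β) * h ^ 2 * F2t
      - C ((3 / 2) * α) * h ^ 2 * F2).IsHomogeneous 4 :=
    ((hG4.sub ((hF2t.pow 2).C_mul _)).sub (((hhhom.pow 2).C_mul _).mul hF2t)).sub
      (((hhhom.pow 2).C_mul _).mul hF2)
  obtain ⟨a, ha⟩ := eq_C_mul_pow_of_jacMinor_eq_zero hhhom hh hQ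
    fun i j => jacMinor_sub_eq_zero_of_add_eq_zero hh (hE i j)
  refine ⟨F2t, 4 * a, hF2t, hF3eq, by rw [hG5eq, hF3eq]; ring, ?_⟩
  rw [show (1 / 4) * (4 * a) = a by ring]
  linear_combination ha
end
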